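/- arXiv:1905.12842 — 4 statements merged into one kernel-verified Lean document; each statement's English description precedes it below -/
import Mathlib

section
/- Let A be positive semidefinite and X, Y positive definite n×n matrices, with α = max{λ_max(X), λ_max(Y)} and β = λ_min(A). Then δ_∞(A+X, A+Y) ≤ (α/(α+β)) δ_∞(X,Y), where δ_∞(P,Q) := ‖log(P^{-1/2} Q P^{-1/2})‖ is the Thompson (invariant) metric on positive definite matrices. -/
open Matrix MeasureTheory ProbabilityTheory
open scoped Classical RealInnerProductSpace

/-- Operator (spectral) norm of a real matrix. -/
noncomputable def opNorm {m n : Type*} [Fintype m] [Fintype n] [DecidableEq n]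
    (A : Matrix m n ℝ) : ℝ :=
  ‖LinearMap.toContinuousLinearMap (Matrix.toEuclideanLin A)‖

/-- Frobenius norm of a real matrix. -/
noncomputable def frob {m n : Type*} [Fintype m] [Fintype n] (A : Matrix m n ℝ) : ℝ :=
  Real.sqrt (∑ i, ∑ j, (A i j) ^ 2)

/-- Positive semidefinite square root (junk value `0` off the PSD matrices). -/
noncomputable def sqrtPD {n : Type*} [Fintype n] [DecidableEq n]
    (A : Matrix n n ℝ) : Matrix n n ℝ :=
  if h : A.PosSemidef then
    (h.1.eigenvectorUnitary : Matrix n n ℝ) * Matrix.diagonal (Real.sqrt ∘ h.1.eigenvalues) *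
      (star (h.1.eigenvectorUnitary : Matrix n n ℝ))
  else 0

/-- Matrix logarithm of a hermitian matrix via the spectral theorem
(junk value `0` off the hermitian matrices). -/
noncomputable def mlog {n : Type*} [Fintype n] [DecidableEq n]
    (A : Matrix n n ℝ) : Matrix n n ℝ :=
  if h : A.IsHermitian then
    (h.eigenvectorUnitary : Matrix n n ℝ) * Matrix.diagonal (Real.log ∘ h.eigenvalues) *
      (star (h.eigenvectorUnitary : Matrix n n ℝ))
  else 0

/-- Thompson (invariant) metric `δ∞(A,B) = ‖log (A^{-1/2} B A^{-1/2})‖`. -/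
noncomputable def thompson {n : Type*} [Fintype n] [DecidableEq n]
    (A B : Matrix n n ℝ) : ℝ :=
  opNorm (mlog ((sqrtPD A)⁻¹ * B * (sqrtPD A)⁻¹))

/-- Largest (real) eigenvalue. -/
noncomputable def lamMax {n : Type*} [Fintype n] [DecidableEq n] (A : Matrix n n ℝ) : ℝ :=
  sSup (spectrum ℝ A)

/-- Smallest (real) eigenvalue. -/
noncomputable def lamMin {n : Type*} [Fintype n] [DecidableEq n] (A : Matrix n n ℝ) : ℝ :=
  sInf (spectrum ℝ A)

/-- Solution `P = Σ_{k≥0} (Lᵀ)^k M L^k` of the discrete Lyapunov equation `P = Lᵀ P L + M`. -/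
noncomputable def dlyap {n : Type*} [Fintype n] [DecidableEq n]
    (L M : Matrix n n ℝ) : Matrix n n ℝ :=
  ∑' k : ℕ, (L ^ k)ᵀ * M * (L ^ k)

/-- `K` stabilizes `(A,B)`: the closed loop matrix `A + BK` has spectral radius `< 1`. -/
def Stabilizes {n d : Type*} [Fintype n] [DecidableEq n] [Fintype d]
    (A : Matrix n n ℝ) (B : Matrix n d ℝ) (K : Matrix d n ℝ) : Prop :=
  ∀ z ∈ spectrum ℂ ((A + B * K).map ((↑) : ℝ → ℂ)), ‖z‖ < 1

/-!
Whitening by `P^{1/2}` turns `δ∞(P, Q)` into the norm of the logarithm of a positive matrix, so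
`δ∞(P, Q) ≤ s` iff `P ≤ eˢ Q` and `Q ≤ eˢ P` in the Loewner order. Let `t = δ∞(X, Y)` and split
`t = a + b` with `β a = α b`. From `Y ≤ eᵗ X`, `Y ≤ α` and `β ≤ A`,
`eᵃ (A + X) - (A + Y) ≥ (eᵃ - 1) A - (1 - e⁻ᵇ) Y ≥ (eᵃ - 1) β - (1 - e⁻ᵇ) α ≥ 0`,
the last step because `(1 - e⁻ᵇ) α ≤ b α = a β ≤ (eᵃ - 1) β`. By symmetry in `X` and `Y`,
`δ∞(A + X, A + Y) ≤ a = α t / (α + β)`.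
-/

open scoped MatrixOrder Matrix.Norms.L2Operator

theorem one_sub_exp_neg_mul_le_exp_sub_one_mul {α β a b : ℝ} (hα : 0 ≤ α) (hβ : 0 ≤ β)
    (hab : β * a = α * b) : (1 - Real.exp (-b)) * α ≤ (Real.exp a - 1) * β := by
  have hb : 1 - Real.exp (-b) ≤ b := by linarith [Real.add_one_le_exp (-b)]
  have ha : a ≤ Real.exp a - 1 := by linarith [Real.add_one_le_exp a]
  calc (1 - Real.exp (-b)) * α ≤ b * α := mul_le_mul_of_nonneg_right hb hα
    _ = a * β := by linarith
    _ ≤ (Real.exp a - 1) * β := mul_le_mul_of_nonneg_right ha hβ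

theorem add_le_exp_smul_add {M : Type*} [AddCommGroup M] [PartialOrder M] [IsOrderedAddMonoid M]
    [Module ℝ M] [PosSMulMono ℝ M] {u A X Y : M} {α β a t : ℝ} (hu : 0 ≤ u) (hα : 0 ≤ α)
    (hβ : 0 ≤ β) (ha : 0 ≤ a) (hat : a ≤ t) (hab : β * a = α * (t - a)) (hA : β • u ≤ A)
    (hY : Y ≤ α • u) (hYX : Y ≤ Real.exp t • X) : A + Y ≤ Real.exp a • (A + X) := by
  have hea : 0 ≤ Real.exp a - 1 := by linarith [Real.add_one_le_exp a]
  have heb : 0 ≤ 1 - Real.exp (-(t - a)) := by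
    linarith [Real.exp_le_one_iff.mpr (neg_nonpos.mpr (sub_nonneg.mpr hat))]
  have hgap : 0 ≤ (Real.exp a - 1) * β - (1 - Real.exp (-(t - a))) * α :=
    sub_nonneg.mpr (one_sub_exp_neg_mul_le_exp_sub_one_mul hα hβ hab)
  calc A + Y ≤ A + Y + ((Real.exp a - 1) * β - (1 - Real.exp (-(t - a))) * α) • u :=
        le_add_of_nonneg_right (smul_nonneg hgap hu)
    _ = A + (Real.exp a - 1) • (β • u) + (Y - (1 - Real.exp (-(t - a))) • (α • u)) := by module
    _ ≤ A + (Real.exp a - 1) • A + (Y - (1 - Real.exp (-(t - a))) • Y) := by gcongr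
    _ = Real.exp a • A + Real.exp (-(t - a)) • Y := by module
    _ ≤ Real.exp a • A + Real.exp (-(t - a)) • (Real.exp t • X) := by gcongr
    _ = Real.exp a • (A + X) := by
      rw [smul_smul, ← Real.exp_add, neg_sub, sub_add_cancel, smul_add]

theorem IsUnit.conjugate_le_conjugate_iff {R : Type*} [Ring R] [StarRing R] [PartialOrder R]
    [StarOrderedRing R] {u a b : R} (hu : IsUnit u) (hu' : IsSelfAdjoint u) :
    u * a * u ≤ u * b * u ↔ a ≤ b := by
  simpa only [hu'.star_eq, mul_sub, sub_mul, sub_nonneg] using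
    hu.star_right_conjugate_nonneg_iff (x := b - a)

theorem CFC.norm_log_le_iff {A : Type*} [NormedRing A] [StarRing A] [NormedAlgebra ℝ A]
    [PartialOrder A] [StarOrderedRing A] [IsometricContinuousFunctionalCalculus ℝ A IsSelfAdjoint]
    [NonnegSpectrumClass ℝ A] {a : A} (ha : IsStrictlyPositive a) {s : ℝ} (hs : 0 ≤ s) :
    ‖log a‖ ≤ s ↔ algebraMap ℝ A (Real.exp (-s)) ≤ a ∧ a ≤ algebraMap ℝ A (Real.exp s) := by
  have hpos : ∀ x ∈ spectrum ℝ a, 0 < x := fun x hx => ha.spectrum_pos hx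
  rw [log, norm_cfc_le_iff _ _ hs (by fun_prop (disch := grind)), algebraMap_le_iff_le_spectrum,
    le_algebraMap_iff_spectrum_le, ← forall₂_and]
  refine forall₂_congr fun x hx => ?_
  rw [Real.norm_eq_abs, abs_le, Real.le_log_iff_exp_le (hpos x hx),
    Real.log_le_iff_le_exp (hpos x hx)]

namespace Matrix

variable {ι : Type*} [Fintype ι] [DecidableEq ι]

theorem opNorm_eq_l2_opNorm {m : Type*} [Fintype m] (M : Matrix m ι ℝ) : opNorm M = ‖M‖ := rfl

theorem IsHermitian.mlog_eq_log {M : Matrix ι ι ℝ} (hM : M.IsHermitian) :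
    mlog M = CFC.log M := by
  rw [mlog, dif_pos hM, CFC.log, hM.cfc_eq]
  simp [IsHermitian.cfc]

theorem PosSemidef.sqrtPD_eq_sqrt {M : Matrix ι ι ℝ} (hM : M.PosSemidef) :
    sqrtPD M = CFC.sqrt M := by
  rw [sqrtPD, dif_pos hM, CFC.sqrt_eq_real_sqrt M hM.nonneg, cfcₙ_eq_cfc, hM.1.cfc_eq]
  simp [IsHermitian.cfc]

theorem IsHermitian.le_lamMax_smul_one {M : Matrix ι ι ℝ} (hM : M.IsHermitian) :
    M ≤ lamMax M • 1 := by
  rw [← Algebra.algebraMap_eq_smul_one, le_algebraMap_iff_spectrum_le hM]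
  exact fun x hx => le_csSup finite_real_spectrum.bddAbove hx

theorem IsHermitian.lamMin_smul_one_le {M : Matrix ι ι ℝ} (hM : M.IsHermitian) :
    lamMin M • 1 ≤ M := by
  rw [← Algebra.algebraMap_eq_smul_one, algebraMap_le_iff_le_spectrum hM]
  exact fun x hx => csInf_le finite_real_spectrum.bddBelow hx

theorem PosSemidef.lamMax_nonneg {M : Matrix ι ι ℝ} (hM : M.PosSemidef) : 0 ≤ lamMax M :=
  Real.sSup_nonneg fun _ hx => spectrum_nonneg_of_nonneg hM.nonneg hx

theorem PosSemidef.lamMin_nonneg {M : Matrix ι ι ℝ} (hM : M.PosSemidef) : 0 ≤ lamMin M :=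
  Real.sInf_nonneg fun _ hx => spectrum_nonneg_of_nonneg hM.nonneg hx

end Matrix

theorem thompson_le_iff {ι : Type*} [Fintype ι] [DecidableEq ι] {P Q : Matrix ι ι ℝ}
    (hP : P.PosDef) (hQ : Q.PosDef) {s : ℝ} (hs : 0 ≤ s) :
    thompson P Q ≤ s ↔ P ≤ Real.exp s • Q ∧ Q ≤ Real.exp s • P := by
  set S := CFC.sqrt P
  have hS : IsSelfAdjoint S := (CFC.sqrt_nonneg P).isSelfAdjoint
  have hSu : IsUnit S := (CFC.isUnit_sqrt_iff P).mpr hP.isUnit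
  have hSS : S * S = P := CFC.sqrt_mul_sqrt_self P hP.posSemidef.nonneg
  set M := S⁻¹ * Q * S⁻¹
  have hM : IsStrictlyPositive M :=
    IsStrictlyPositive.conjugate_of_isUnit_of_isSelfAdjoint _ _ (isUnit_nonsing_inv_iff.mpr hSu)
      (IsHermitian.inv hS) (isStrictlyPositive_iff_posDef.mpr hQ)
  have hSMS : S * M * S = Q := by
    have hdet := (isUnit_iff_isUnit_det S).mp hSu
    calc S * M * S = S * S⁻¹ * Q * (S⁻¹ * S) := by simp only [M, mul_assoc]
      _ = Q := by rw [mul_nonsing_inv _ hdet, nonsing_inv_mul _ hdet, one_mul, mul_one]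
  have hSrS : ∀ r : ℝ, S * algebraMap ℝ _ r * S = r • P := fun r => by
    rw [Algebra.algebraMap_eq_smul_one, mul_smul_comm, mul_one, smul_mul_assoc, hSS]
  rw [thompson, hP.posSemidef.sqrtPD_eq_sqrt, IsHermitian.mlog_eq_log hM.isSelfAdjoint,
    opNorm_eq_l2_opNorm, CFC.norm_log_le_iff hM hs, ← hSu.conjugate_le_conjugate_iff hS,
    ← hSu.conjugate_le_conjugate_iff hS (a := M), hSrS, hSrS, hSMS, Real.exp_neg,
    inv_smul_le_iff_of_pos (Real.exp_pos s)]

/-- Contraction of the Thompson metric under translation by a PSD matrix. -/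
theorem thompson_add_contraction {n : ℕ} (A X Y : Matrix (Fin n) (Fin n) ℝ)
    (hA : A.PosSemidef) (hX : X.PosDef) (hY : Y.PosDef) :
    thompson (A + X) (A + Y) ≤
      (max (lamMax X) (lamMax Y)) / (max (lamMax X) (lamMax Y) + lamMin A) * thompson X Y := by
  set α := max (lamMax X) (lamMax Y)
  set β := lamMin A
  set t := thompson X Y
  set a := α / (α + β) * t
  have hα : 0 ≤ α := hX.posSemidef.lamMax_nonneg.trans (le_max_left _ _)
  have hβ : 0 ≤ β := hA.lamMin_nonneg
  have ht : 0 ≤ t := norm_nonneg _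
  have ha : 0 ≤ a := by positivity
  have hat : a ≤ t := mul_le_of_le_one_left ht (div_le_one_of_le₀ (by linarith) (by positivity))
  have hab : β * a = α * (t - a) := by
    rcases (add_nonneg hα hβ).eq_or_lt with h | h
    · rw [show α = 0 by linarith, show β = 0 by linarith]; ring
    · simp only [a]; field_simp; ring
  have hXα : X ≤ α • 1 := hX.1.le_lamMax_smul_one.trans (by gcongr; exact le_max_left _ _)
  have hYα : Y ≤ α • 1 := hY.1.le_lamMax_smul_one.trans (by gcongr; exact le_max_right _ _)
  have hAβ : β • 1 ≤ A := hA.1.lamMin_smul_one_le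
  obtain ⟨hXY, hYX⟩ := (thompson_le_iff hX hY ht).mp le_rfl
  rw [thompson_le_iff (PosDef.posSemidef_add hA hX) (PosDef.posSemidef_add hA hY) ha]
  exact ⟨add_le_exp_smul_add zero_le_one hα hβ ha hat hab hAβ hXα hXY,
    add_le_exp_smul_add zero_le_one hα hβ ha hat hab hAβ hYα hYX⟩
end

section
/- Suppose A and B are positive definite n×n matrices with A ⪰ μI and B ⪰ μI for some μ > 0. Then δ_∞(A,B) ≤ ‖A−B‖/μ. -/
open Matrix MeasureTheory ProbabilityTheory
open scoped Classical RealInnerProductSpace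

/-!
The hypotheses give the Loewner bounds `B ≤ (1 + r) A` and `A ≤ (1 + r) B` with
`r = ‖A - B‖ / μ`, because `B - A ≤ ‖A - B‖ ≤ r A`. Conjugating by `A^{-1/2}` places the
spectrum of `C = A^{-1/2} B A^{-1/2}` in `[(1 + r)⁻¹, 1 + r]`, where `|log| ≤ log (1 + r) ≤ r`;
the norm of `log C` is the largest value of `|log|` on the spectrum of `C`.
-/

lemma Real.abs_log_le_sub_one_of_inv_le_of_le {x c : ℝ} (hc : 0 < c) (hcx : c⁻¹ ≤ x)
    (hxc : x ≤ c) : |Real.log x| ≤ c - 1 := by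
  have hx : 0 < x := (inv_pos.2 hc).trans_le hcx
  have hxinv : x⁻¹ ≤ c := by rwa [inv_le_comm₀ hx hc]
  have hlog_inv := Real.log_le_sub_one_of_pos (inv_pos.2 hx)
  rw [Real.log_inv] at hlog_inv
  rw [abs_le]
  constructor <;> linarith [Real.log_le_sub_one_of_pos hx]

section StarOrderedAlgebra

variable {A : Type*} [Ring A] [StarRing A] [PartialOrder A] [StarOrderedRing A] [Algebra ℝ A]

lemma IsSelfAdjoint.conjugate_le_algebraMap {a b t : A} {c : ℝ} (ht : IsSelfAdjoint t)
    (hta : t * a * t = 1) (hba : b ≤ c • a) : t * b * t ≤ algebraMap ℝ A c := by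
  calc t * b * t ≤ t * (c • a) * t := ht.conjugate_le_conjugate hba
    _ = algebraMap ℝ A c := by
      rw [mul_smul_comm, smul_mul_assoc, hta, Algebra.algebraMap_eq_smul_one]

lemma IsSelfAdjoint.algebraMap_inv_le_conjugate [StarModule ℝ A] {a b t : A} {c : ℝ}
    (hc : 0 < c) (ht : IsSelfAdjoint t) (hta : t * a * t = 1) (hab : a ≤ c • b) :
    algebraMap ℝ A c⁻¹ ≤ t * b * t := by
  have h : (1 : A) ≤ c • (t * b * t) := by
    simpa only [hta, mul_smul_comm, smul_mul_assoc] using ht.conjugate_le_conjugate hab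
  calc algebraMap ℝ A c⁻¹ = c⁻¹ • (1 : A) := Algebra.algebraMap_eq_smul_one _
    _ ≤ c⁻¹ • c • (t * b * t) := smul_le_smul_of_nonneg_left h (by positivity)
    _ = t * b * t := inv_smul_smul₀ hc.ne' _

end StarOrderedAlgebra

section IsometricCFC

variable {A : Type*} [NormedRing A] [StarRing A] [NormedAlgebra ℝ A] [StarModule ℝ A]
  [PartialOrder A] [StarOrderedRing A] [IsometricContinuousFunctionalCalculus ℝ A IsSelfAdjoint]

lemma le_one_add_norm_sub_div_smul {a b : A} {μ : ℝ} (hμ : 0 < μ)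
    (ha : algebraMap ℝ A μ ≤ a) (hb : IsSelfAdjoint b) :
    b ≤ (1 + ‖a - b‖ / μ) • a := by
  have ha' : IsSelfAdjoint a := (IsSelfAdjoint.algebraMap A (.all μ)).of_ge ha
  have hba : IsSelfAdjoint (b - a) := hb.sub ha'
  have hdiff : b - a ≤ algebraMap ℝ A ‖b - a‖ := by
    refine le_algebraMap_of_spectrum_le (fun x hx => (le_abs_self x).trans ?_) hba
    simpa only [id, cfc_id ℝ (b - a) hba, Real.norm_eq_abs] using
      norm_apply_le_norm_cfc id (b - a) hx
  have hscale : algebraMap ℝ A ‖b - a‖ = (‖a - b‖ / μ) • algebraMap ℝ A μ := by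
    rw [Algebra.algebraMap_eq_smul_one, Algebra.algebraMap_eq_smul_one, smul_smul,
      norm_sub_rev, div_mul_cancel₀ _ hμ.ne']
  calc b = a + (b - a) := by abel
    _ ≤ a + (‖a - b‖ / μ) • a := by
      grw [hdiff, hscale, smul_le_smul_of_nonneg_left ha (by positivity)]
    _ = (1 + ‖a - b‖ / μ) • a := by rw [add_smul, one_smul]

theorem norm_cfc_log_conjugate_le [NonnegSpectrumClass ℝ A] {a b t : A} {μ : ℝ} (hμ : 0 < μ)
    (ht : IsSelfAdjoint t) (hta : t * a * t = 1) (ha : algebraMap ℝ A μ ≤ a)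
    (hb : algebraMap ℝ A μ ≤ b) :
    ‖cfc Real.log (t * b * t)‖ ≤ ‖a - b‖ / μ := by
  have hμA : IsSelfAdjoint (algebraMap ℝ A μ) := .algebraMap A (.all μ)
  have ha' : IsSelfAdjoint a := hμA.of_ge ha
  have hb' : IsSelfAdjoint b := hμA.of_ge hb
  set c := 1 + ‖a - b‖ / μ
  have hc : 0 < c := by positivity
  have htbt : IsSelfAdjoint (t * b * t) := by simpa only [ht.star_eq] using hb'.conjugate t
  have hupper := (le_algebraMap_iff_spectrum_le htbt).1 <|
    ht.conjugate_le_algebraMap hta (le_one_add_norm_sub_div_smul hμ ha hb')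
  have hlower := (algebraMap_le_iff_le_spectrum htbt).1 <|
    ht.algebraMap_inv_le_conjugate hc hta
      (by simpa only [norm_sub_rev] using le_one_add_norm_sub_div_smul hμ hb ha')
  refine norm_cfc_le (by positivity) fun x hx => ?_
  simpa [c] using Real.abs_log_le_sub_one_of_inv_le_of_le hc (hlower x hx) (hupper x hx)

end IsometricCFC

namespace Matrix

variable {n : Type*} [Fintype n] [DecidableEq n] {A : Matrix n n ℝ}

lemma IsHermitian.mlog_eq_cfc (hA : A.IsHermitian) : mlog A = cfc Real.log A := by
  rw [mlog, dif_pos hA, hA.cfc_eq, IsHermitian.cfc, Unitary.conjStarAlgAut_apply]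
  rfl

open scoped MatrixOrder in
lemma PosSemidef.sqrtPD_eq_sqrt_s5 (hA : A.PosSemidef) : sqrtPD A = CFC.sqrt A := by
  rw [sqrtPD, dif_pos hA, CFC.sqrt_eq_real_sqrt A hA.nonneg, cfcₙ_eq_cfc, hA.1.cfc_eq,
    IsHermitian.cfc, Unitary.conjStarAlgAut_apply]
  rfl

open scoped MatrixOrder in
lemma PosSemidef.isHermitian_sqrtPD (hA : A.PosSemidef) : (sqrtPD A).IsHermitian := by
  rw [hA.sqrtPD_eq_sqrt_s5]
  exact (CFC.sqrt_nonneg A).posSemidef.1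

open scoped MatrixOrder in
lemma PosDef.inv_sqrtPD_mul_mul_inv_sqrtPD (hA : A.PosDef) :
    (sqrtPD A)⁻¹ * A * (sqrtPD A)⁻¹ = 1 := by
  have hS : sqrtPD A * sqrtPD A = A := by
    rw [hA.posSemidef.sqrtPD_eq_sqrt_s5, CFC.sqrt_mul_sqrt_self A hA.posSemidef.nonneg]
  set S := sqrtPD A
  have hdet : IsUnit S.det :=
    isUnit_of_mul_isUnit_left (by rw [← det_mul, hS]; exact hA.det_pos.ne'.isUnit)
  rw [← hS, ← mul_assoc, nonsing_inv_mul _ hdet, one_mul, mul_nonsing_inv _ hdet]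

end Matrix

open scoped Matrix.Norms.L2Operator MatrixOrder in
/-- Upper bound of the Thompson metric by the operator norm of the difference. -/
theorem thompson_le_opNorm_div {n : ℕ} (μ : ℝ) (hμ : 0 < μ)
    (A B : Matrix (Fin n) (Fin n) ℝ) (hA : A.PosDef) (hB : B.PosDef)
    (hAμ : (A - μ • (1 : Matrix (Fin n) (Fin n) ℝ)).PosSemidef)
    (hBμ : (B - μ • (1 : Matrix (Fin n) (Fin n) ℝ)).PosSemidef) :
    thompson A B ≤ opNorm (A - B) / μ := by
  have ht : IsSelfAdjoint (sqrtPD A)⁻¹ := hA.posSemidef.isHermitian_sqrtPD.inv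
  have hC : ((sqrtPD A)⁻¹ * B * (sqrtPD A)⁻¹).IsHermitian := by
    rw [isHermitian_iff_isSelfAdjoint]
    simpa only [ht.star_eq] using hB.isHermitian.isSelfAdjoint.conjugate (sqrtPD A)⁻¹
  change ‖mlog ((sqrtPD A)⁻¹ * B * (sqrtPD A)⁻¹)‖ ≤ ‖A - B‖ / μ
  rw [hC.mlog_eq_cfc]
  refine norm_cfc_log_conjugate_le hμ ht hA.inv_sqrtPD_mul_mul_inv_sqrtPD ?_ ?_
  · rwa [Algebra.algebraMap_eq_smul_one, Matrix.le_iff]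
  · rwa [Algebra.algebraMap_eq_smul_one, Matrix.le_iff]
end

section
/- Suppose A, B are positive definite matrices with B ⪰ A. Then ‖A − B‖ ≤ ‖A‖ (exp(δ_∞(A,B)) − 1). Moreover, if δ_∞(A,B) ≤ 1, then ‖A − B‖ ≤ e ‖A‖ δ_∞(A,B). -/
open Matrix MeasureTheory ProbabilityTheory
open scoped Classical RealInnerProductSpace

/-! With `S = A^{1/2}` and `C = S⁻¹ B S⁻¹` we have `A = S²`, `B = S C S` and `1 ≤ C`, so
`‖B - A‖ = ‖S (C - 1) S‖ ≤ ‖S‖² ‖C - 1‖ = ‖A‖ ‖C - 1‖`. The eigenvalues of `C` lie in `[1, e^t]`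
with `t = ‖log C‖ = δ_∞(A, B)`, whence `‖C - 1‖ ≤ e^t - 1`; and `e^t - 1 ≤ t e^t ≤ e t` for
`t ≤ 1`. -/

open scoped Matrix.Norms.L2Operator MatrixOrder

lemma Real.exp_sub_one_le_exp_one_mul {t : ℝ} (ht₀ : 0 ≤ t) (ht₁ : t ≤ 1) :
    Real.exp t - 1 ≤ Real.exp 1 * t := by
  have h := mul_le_mul_of_nonneg_right (Real.one_sub_le_exp_neg t) (Real.exp_pos t).le
  rw [← Real.exp_add, neg_add_cancel, Real.exp_zero] at h
  calc Real.exp t - 1 ≤ Real.exp t * t := by linarith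
    _ ≤ Real.exp 1 * t := by gcongr

lemma IsSelfAdjoint.of_one_le {R : Type*} [Ring R] [PartialOrder R] [StarRing R]
    [StarOrderedRing R] {c : R} (hc : 1 ≤ c) : IsSelfAdjoint c := by
  simpa using (IsSelfAdjoint.of_nonneg (sub_nonneg.2 hc)).add (.one R)

lemma norm_mul_mul_sub_mul_self_le {R : Type*} [NormedRing R] [StarRing R] [CStarRing R]
    {s c : R} (hs : IsSelfAdjoint s) : ‖s * c * s - s * s‖ ≤ ‖s * s‖ * ‖c - 1‖ := by
  have hss : ‖s * s‖ = ‖s‖ * ‖s‖ := by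
    simpa [hs.star_eq] using CStarRing.norm_star_mul_self (x := s)
  calc ‖s * c * s - s * s‖ = ‖s * (c - 1) * s‖ := by noncomm_ring
    _ ≤ ‖s‖ * ‖c - 1‖ * ‖s‖ := norm_mul₃_le
    _ = ‖s * s‖ * ‖c - 1‖ := by rw [hss]; ring

section
variable {n : Type*} [Fintype n] [DecidableEq n]

lemma opNorm_eq_norm (A : Matrix n n ℝ) : opNorm A = ‖A‖ := (Matrix.l2_opNorm_def A).symm

lemma opNorm_nonneg (A : Matrix n n ℝ) : 0 ≤ opNorm A := norm_nonneg _

lemma Matrix.IsHermitian.cfc_eq_conj {A : Matrix n n ℝ} (hA : A.IsHermitian) (f : ℝ → ℝ) :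
    cfc f A = (hA.eigenvectorUnitary : Matrix n n ℝ) * diagonal (f ∘ hA.eigenvalues) *
      star (hA.eigenvectorUnitary : Matrix n n ℝ) := by
  rw [hA.cfc_eq, IsHermitian.cfc, Unitary.conjStarAlgAut_apply]
  rfl

lemma Matrix.IsHermitian.norm_cfc_le {A : Matrix n n ℝ} (hA : A.IsHermitian) {f : ℝ → ℝ} {c : ℝ}
    (hc : 0 ≤ c) (h : ∀ i, |f (hA.eigenvalues i)| ≤ c) : ‖cfc f A‖ ≤ c := by
  rw [hA.cfc_eq_conj, mul_assoc, CStarRing.norm_coe_unitary_mul, ← Unitary.coe_star,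
    CStarRing.norm_mul_coe_unitary, l2_opNorm_diagonal]
  exact (pi_norm_le_iff_of_nonneg hc).2 h

lemma Matrix.norm_sub_one_le_exp_norm_log_sub_one {C : Matrix n n ℝ} (hC : 1 ≤ C) :
    ‖C - 1‖ ≤ Real.exp ‖cfc Real.log C‖ - 1 := by
  have hC_herm : C.IsHermitian := IsSelfAdjoint.of_one_le hC
  have hsub : C - 1 = cfc (fun x : ℝ => x - 1) C := by
    rw [cfc_sub (fun x : ℝ => x) (fun _ => 1) C, cfc_id' ℝ C, cfc_const_one ℝ C]
  rw [hsub]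
  have hexp : 0 ≤ Real.exp ‖cfc Real.log C‖ - 1 := by
    linarith [Real.one_le_exp (norm_nonneg (cfc Real.log C))]
  refine hC_herm.norm_cfc_le hexp fun i => ?_
  have hμ := hC_herm.eigenvalues_mem_spectrum_real i
  have hμ₁ : 1 ≤ hC_herm.eigenvalues i :=
    (algebraMap_le_iff_le_spectrum (r := (1 : ℝ)) (a := C)).1 (by simpa using hC) _ hμ
  have hlog : Real.log (hC_herm.eigenvalues i) ≤ ‖cfc Real.log C‖ := by
    -- `spectrum.norm_le_norm_of_mem` needs `‖1‖ = 1`, which fails for the empty index type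
    have : Nonempty n := ⟨i⟩
    refine (Real.le_norm_self _).trans (spectrum.norm_le_norm_of_mem ?_)
    exact (cfc_map_spectrum Real.log C hC_herm (C.finite_real_spectrum.continuousOn _)).symm ▸
      Set.mem_image_of_mem _ hμ
  rw [abs_of_nonneg (by linarith)]
  calc hC_herm.eigenvalues i - 1 = Real.exp (Real.log (hC_herm.eigenvalues i)) - 1 := by
        rw [Real.exp_log (by linarith)]
    _ ≤ _ := by gcongr

lemma sqrtPD_eq_sqrt {A : Matrix n n ℝ} (hA : A.PosSemidef) : sqrtPD A = CFC.sqrt A := by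
  have hsq : cfc Real.sqrt A * cfc Real.sqrt A = A :=
    calc cfc Real.sqrt A * cfc Real.sqrt A = cfc (fun x => √x * √x) A := (cfc_mul ..).symm
      _ = cfc (fun x => x) A := cfc_congr fun x hx =>
          Real.mul_self_sqrt (spectrum_nonneg_of_nonneg hA.nonneg hx)
      _ = A := cfc_id' ℝ A
  rw [sqrtPD, dif_pos hA, ← hA.1.cfc_eq_conj]
  exact (CFC.sqrt_unique hsq (cfc_nonneg fun x _ => Real.sqrt_nonneg x)).symm

lemma mlog_eq_cfc {A : Matrix n n ℝ} (hA : A.IsHermitian) : mlog A = cfc Real.log A := by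
  rw [mlog, dif_pos hA, hA.cfc_eq_conj]

lemma opNorm_sub_le_mul_exp_thompson_sub_one {A B : Matrix n n ℝ} (hA : A.PosDef)
    (hAB : A ≤ B) :
    opNorm (A - B) ≤ opNorm A * (Real.exp (thompson A B) - 1) := by
  set S := CFC.sqrt A
  have hS_sa : IsSelfAdjoint S := (CFC.sqrt_nonneg A).isSelfAdjoint
  have hS_det : IsUnit S.det :=
    (Matrix.isUnit_iff_isUnit_det S).1 ((CFC.isUnit_sqrt_iff A).2 hA.isUnit)
  have hSS : S * S = A := CFC.sqrt_mul_sqrt_self A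
  set C := S⁻¹ * B * S⁻¹
  have hB : B = S * C * S := by
    simp only [C, ← mul_assoc, Matrix.mul_nonsing_inv S hS_det, one_mul]
    rw [mul_assoc, Matrix.nonsing_inv_mul S hS_det, mul_one]
  have hS_inv_star : star S⁻¹ = S⁻¹ := hS_sa.isHermitian.inv
  have hC : 1 ≤ C :=
    calc 1 = star S⁻¹ * (S * S) * S⁻¹ := by
          rw [hS_inv_star, ← mul_assoc, Matrix.nonsing_inv_mul S hS_det, one_mul,
            Matrix.mul_nonsing_inv S hS_det]
      _ ≤ star S⁻¹ * B * S⁻¹ := star_left_conjugate_le_conjugate (hSS ▸ hAB) _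
      _ = C := by rw [hS_inv_star]
  have ht : thompson A B = ‖cfc Real.log C‖ := by
    rw [thompson, sqrtPD_eq_sqrt hA.posSemidef, mlog_eq_cfc (IsSelfAdjoint.of_one_le hC),
      opNorm_eq_norm]
  calc opNorm (A - B) = ‖S * C * S - S * S‖ := by rw [opNorm_eq_norm, norm_sub_rev, ← hB, hSS]
    _ ≤ ‖S * S‖ * ‖C - 1‖ := norm_mul_mul_sub_mul_self_le hS_sa
    _ ≤ opNorm A * (Real.exp (thompson A B) - 1) := by
      rw [hSS, ht, opNorm_eq_norm]
      gcongr
      exact Matrix.norm_sub_one_le_exp_norm_log_sub_one hC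

end

theorem opNorm_le_thompson_general {n : ℕ} (A B : Matrix (Fin n) (Fin n) ℝ)
    (hA : A.PosDef) (hBA : (B - A).PosSemidef) :
    opNorm (A - B) ≤ opNorm A * (Real.exp (thompson A B) - 1) ∧
      (thompson A B ≤ 1 → opNorm (A - B) ≤ Real.exp 1 * opNorm A * thompson A B) := by
  have hbound := opNorm_sub_le_mul_exp_thompson_sub_one hA hBA
  refine ⟨hbound, fun ht₁ => hbound.trans ?_⟩
  calc opNorm A * (Real.exp (thompson A B) - 1)
      ≤ opNorm A * (Real.exp 1 * thompson A B) := by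
        gcongr
        · exact opNorm_nonneg A
        · exact Real.exp_sub_one_le_exp_one_mul (opNorm_nonneg _) ht₁
    _ = Real.exp 1 * opNorm A * thompson A B := by ring

/-- Operator-norm bound of the difference in terms of the Thompson metric. -/
theorem opNorm_le_thompson {n : ℕ} (A B : Matrix (Fin n) (Fin n) ℝ)
    (hA : A.PosDef) (hB : B.PosDef) (hBA : (B - A).PosSemidef) :
    opNorm (A - B) ≤ opNorm A * (Real.exp (thompson A B) - 1) ∧
      (thompson A B ≤ 1 → opNorm (A - B) ≤ Real.exp 1 * opNorm A * thompson A B) :=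
  opNorm_le_thompson_general A B hA hBA
end

section
/- Let K and K₀ be stabilizing feedback matrices for the pair (A,B), with value functions V = dlyap(A+BK, S + KᵀRK) and V₀ = dlyap(A+BK₀, S + K₀ᵀRK₀), where S is positive definite and R positive semidefinite. If V ⪯ V₀, then for all k ≥ 0, ‖(A+BK)^k‖ ≤ √(λ_max(V₀)/λ_min(S)) · (1 − λ_min(V₀^{-1} S))^{k/2}. -/
open Matrix MeasureTheory ProbabilityTheory
open scoped Classical RealInnerProductSpace

/-! Writing `L = A + BK` and `c = λ_min(V₀⁻¹ S)`, the Lyapunov equation for `V` gives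
`Lᵀ V L = V - S - KᵀRK ⪯ V - c V₀ ⪯ (1 - c) V`: conjugating by `V₀^{1/2}` shows `c V₀ ⪯ S`, and
`V ⪯ V₀`. Iterating, `(Lᵏ)ᵀ V Lᵏ ⪯ (1 - c)ᵏ V`, and the sandwich
`λ_min(S) I ⪯ S ⪯ V ⪯ V₀ ⪯ λ_max(V₀) I` turns this into
`(Lᵏ)ᵀ Lᵏ ⪯ (λ_max(V₀) / λ_min(S)) (1 - c)ᵏ I`, which is the operator norm bound. -/

open Filter
open scoped NNReal MatrixOrder

theorem Real.sqrt_pow_of_nonneg {x : ℝ} (hx : 0 ≤ x) (k : ℕ) : √(x ^ k) = √x ^ k := by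
  rw [Real.sqrt_eq_iff_eq_sq (pow_nonneg hx k) (by positivity), ← pow_mul, mul_comm, pow_mul,
    Real.sq_sqrt hx]

theorem eventually_norm_pow_le_of_spectralRadius_lt {A : Type*} [NormedRing A]
    [NormedAlgebra ℂ A] [CompleteSpace A] {a : A} {r : ℝ≥0} (h : spectralRadius ℂ a < r) :
    ∀ᶠ k : ℕ in atTop, ‖a ^ k‖ ≤ r ^ k := by
  filter_upwards
    [(spectrum.pow_norm_pow_one_div_tendsto_nhds_spectralRadius a).eventually_lt_const h,
    eventually_ne_atTop 0] with k hk hk0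
  have hroot : ‖a ^ k‖ ^ (1 / k : ℝ) ≤ r := by
    rw [← ENNReal.ofReal_coe_nnreal] at hk
    exact ((ENNReal.ofReal_lt_ofReal_iff_of_nonneg (by positivity)).1 hk).le
  calc ‖a ^ k‖ = (‖a ^ k‖ ^ (1 / k : ℝ)) ^ k := by
        rw [← Real.rpow_natCast, ← Real.rpow_mul (norm_nonneg _), one_div,
          inv_mul_cancel₀ (by exact_mod_cast hk0), Real.rpow_one]
    _ ≤ r ^ k := by gcongr

def Matrix.SchurStable {ι : Type*} [Fintype ι] [DecidableEq ι] (L : Matrix ι ι ℝ) : Prop :=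
  ∀ z ∈ spectrum ℂ (L.map ((↑) : ℝ → ℂ)), ‖z‖ < 1

theorem Stabilizes.schurStable {ι κ : Type*} [Fintype ι] [DecidableEq ι] [Fintype κ]
    {A : Matrix ι ι ℝ} {B : Matrix ι κ ℝ} {K : Matrix κ ι ℝ} (h : Stabilizes A B K) :
    (A + B * K).SchurStable :=
  h

namespace Matrix

section Closed

open scoped ComplexOrder

variable {ι 𝕜 : Type*} [Fintype ι] [RCLike 𝕜]

theorem isClosed_setOf_posSemidef : IsClosed {A : Matrix ι ι 𝕜 | A.PosSemidef} := by
  classical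
  simp only [posSemidef_iff_dotProduct_mulVec, Set.ofPred_and, Set.ofPred_forall]
  refine (isClosed_eq continuous_id.matrix_conjTranspose continuous_id).inter
    (isClosed_iInter fun x => isClosed_le continuous_const ?_)
  fun_prop

theorem _root_.HasSum.posSemidef {κ : Type*} {f : κ → Matrix ι ι 𝕜} {A : Matrix ι ι 𝕜}
    (h : HasSum f A) (hf : ∀ k, (f k).PosSemidef) : A.PosSemidef :=
  isClosed_setOf_posSemidef.mem_of_tendsto h
    (Eventually.of_forall fun s => posSemidef_sum s fun k _ => hf k)

end Closed

namespace SchurStable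

variable {ι : Type*} [Fintype ι] [DecidableEq ι] {L : Matrix ι ι ℝ}

section Frobenius

attribute [local instance] Matrix.frobeniusNormedAddCommGroup Matrix.frobeniusNormedRing
  Matrix.frobeniusNormedAlgebra

/- Gelfand's formula for the complexification of `L`. The Frobenius norm is used because it does
not change under `map ofReal` or under transposition. -/
theorem exists_norm_pow_le (hL : L.SchurStable) :
    ∃ r : ℝ, 0 ≤ r ∧ r < 1 ∧ ∀ᶠ k : ℕ in atTop, ‖L ^ k‖ ≤ r ^ k := by
  have hρ : spectralRadius ℂ (L.map ((↑) : ℝ → ℂ)) < 1 := by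
    rcases (spectrum ℂ (L.map ((↑) : ℝ → ℂ))).eq_empty_or_nonempty with h | h
    · simp [spectralRadius, h]
    · exact spectrum.spectralRadius_lt_of_forall_lt_of_nonempty h fun z hz => by
        exact_mod_cast hL z hz
  obtain ⟨r, hρr, hr1⟩ := ENNReal.lt_iff_exists_nnreal_btwn.mp hρ
  refine ⟨r, r.2, by exact_mod_cast hr1, ?_⟩
  filter_upwards [eventually_norm_pow_le_of_spectralRadius_lt hρr] with k hk
  have hmap : L.map ((↑) : ℝ → ℂ) ^ k = (L ^ k).map (↑) :=
    (map_pow Complex.ofRealHom.mapMatrix L k).symm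
  rwa [hmap, frobenius_norm_map_eq _ _ Complex.norm_real] at hk

theorem summable_transpose_pow_mul_mul_pow (hL : L.SchurStable) (M : Matrix ι ι ℝ) :
    Summable fun k : ℕ => (L ^ k)ᵀ * M * L ^ k := by
  obtain ⟨r, hr0, hr1, hr⟩ := hL.exists_norm_pow_le
  refine Summable.of_norm_bounded_eventually_nat
    ((summable_geometric_of_lt_one (sq_nonneg r) (by nlinarith)).mul_left ‖M‖) ?_
  filter_upwards [hr] with k hk
  calc ‖(L ^ k)ᵀ * M * L ^ k‖ ≤ ‖L ^ k‖ * ‖M‖ * ‖L ^ k‖ := by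
        grw [frobenius_norm_mul, frobenius_norm_mul, frobenius_norm_transpose]
    _ ≤ r ^ k * ‖M‖ * r ^ k := by gcongr
    _ = ‖M‖ * (r ^ 2) ^ k := by ring

end Frobenius

theorem hasSum_dlyap (hL : L.SchurStable) (M : Matrix ι ι ℝ) :
    HasSum (fun k : ℕ => (L ^ k)ᵀ * M * L ^ k) (dlyap L M) :=
  (hL.summable_transpose_pow_mul_mul_pow M).hasSum

theorem dlyap_eq (hL : L.SchurStable) (M : Matrix ι ι ℝ) :
    dlyap L M = Lᵀ * dlyap L M * L + M := by
  have h := hL.hasSum_dlyap M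
  have hshift : HasSum (fun k : ℕ => (L ^ (k + 1))ᵀ * M * L ^ (k + 1)) (Lᵀ * dlyap L M * L) := by
    simpa only [pow_succ, transpose_mul, Matrix.mul_assoc] using (h.mul_left Lᵀ).mul_right L
  simpa using h.unique ((hasSum_nat_add_iff 1).mp hshift)

theorem posSemidef_dlyap (hL : L.SchurStable) {M : Matrix ι ι ℝ} (hM : M.PosSemidef) :
    (dlyap L M).PosSemidef :=
  (hL.hasSum_dlyap M).posSemidef fun k => by
    simpa using hM.conjTranspose_mul_mul_same (L ^ k)

end SchurStable

section Loewner

theorem PosDef.of_le {ι : Type*} {S V : Matrix ι ι ℝ} (hS : S.PosDef) (h : S ≤ V) : V.PosDef := by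
  simpa using hS.add_posSemidef h

variable {ι : Type*} [Fintype ι]

theorem transpose_mul_mul_le_transpose_mul_mul {X Y : Matrix ι ι ℝ} (h : X ≤ Y)
    (L : Matrix ι ι ℝ) : Lᵀ * X * L ≤ Lᵀ * Y * L := by
  simpa [star_eq_conjTranspose] using star_left_conjugate_le_conjugate h L

theorem transpose_mul_mul_le_of_lyapunov_eq {L V V₀ M : Matrix ι ι ℝ} {c : ℝ}
    (hV : V = Lᵀ * V * L + M) (hcM : c • V₀ ≤ M) (hVV₀ : V ≤ V₀) (hc : 0 ≤ c) :
    Lᵀ * V * L ≤ (1 - c) • V :=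
  calc Lᵀ * V * L = V - M := eq_sub_of_add_eq hV.symm
    _ ≤ V - c • V₀ := sub_le_sub_left hcM V
    _ ≤ V - c • V := sub_le_sub_left (smul_le_smul_of_nonneg_left hVV₀ hc) V
    _ = (1 - c) • V := by rw [sub_smul, one_smul]

theorem le_of_lyapunov_eq {L V M : Matrix ι ι ℝ} (hV : V = Lᵀ * V * L + M) (hV0 : 0 ≤ V) :
    M ≤ V := by
  have h := transpose_mul_mul_le_transpose_mul_mul hV0 L
  rw [Matrix.mul_zero, Matrix.zero_mul] at h
  exact (le_add_of_nonneg_left h).trans_eq hV.symm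

variable [DecidableEq ι]

theorem transpose_pow_mul_mul_pow_le {L V : Matrix ι ι ℝ} {ρ : ℝ} (hρ : 0 ≤ ρ)
    (h : Lᵀ * V * L ≤ ρ • V) (k : ℕ) : (L ^ k)ᵀ * V * L ^ k ≤ ρ ^ k • V := by
  induction k with
  | zero => simp
  | succ k ih =>
    calc (L ^ (k + 1))ᵀ * V * L ^ (k + 1) = Lᵀ * ((L ^ k)ᵀ * V * L ^ k) * L := by
          simp only [pow_succ, transpose_mul, Matrix.mul_assoc]
      _ ≤ Lᵀ * (ρ ^ k • V) * L := transpose_mul_mul_le_transpose_mul_mul ih L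
      _ = ρ ^ k • (Lᵀ * V * L) := by rw [Matrix.mul_smul, Matrix.smul_mul]
      _ ≤ ρ ^ k • ρ • V := smul_le_smul_of_nonneg_left h (pow_nonneg hρ k)
      _ = ρ ^ (k + 1) • V := by rw [smul_smul, pow_succ]

theorem transpose_mul_self_le_of_transpose_mul_mul_le {X V : Matrix ι ι ℝ} {a b ρ : ℝ}
    (ha : 0 < a) (hρ : 0 ≤ ρ) (haV : a • 1 ≤ V) (hVb : V ≤ b • 1) (hX : Xᵀ * V * X ≤ ρ • V) :
    Xᵀ * X ≤ (b / a * ρ) • 1 := by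
  have h : a • (Xᵀ * X) ≤ (b * ρ) • 1 :=
    calc a • (Xᵀ * X) = Xᵀ * (a • 1) * X := by
          rw [Matrix.mul_smul, Matrix.smul_mul, Matrix.mul_one]
      _ ≤ Xᵀ * V * X := transpose_mul_mul_le_transpose_mul_mul haV X
      _ ≤ ρ • V := hX
      _ ≤ ρ • b • 1 := smul_le_smul_of_nonneg_left hVb hρ
      _ = (b * ρ) • 1 := by rw [smul_smul, mul_comm]
  calc Xᵀ * X = a⁻¹ • a • (Xᵀ * X) := by rw [smul_smul, inv_mul_cancel₀ ha.ne', one_smul]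
    _ ≤ a⁻¹ • (b * ρ) • 1 := smul_le_smul_of_nonneg_left h (inv_nonneg.2 ha.le)
    _ = (b / a * ρ) • 1 := by rw [smul_smul]; ring_nf

end Loewner

section Spectrum

variable {ι : Type*} [Fintype ι] [DecidableEq ι] {A P Q T : Matrix ι ι ℝ}

theorem IsHermitian.lamMin_smul_one_le_s10 (hA : A.IsHermitian) :
    lamMin A • (1 : Matrix ι ι ℝ) ≤ A := by
  rw [← Algebra.algebraMap_eq_smul_one, algebraMap_le_iff_le_spectrum (ha := hA.isSelfAdjoint)]
  exact fun x hx => csInf_le (finite_spectrum A).bddBelow hx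

theorem IsHermitian.le_lamMax_smul_one_s10 (hA : A.IsHermitian) :
    A ≤ lamMax A • (1 : Matrix ι ι ℝ) := by
  rw [← Algebra.algebraMap_eq_smul_one, le_algebraMap_iff_spectrum_le (ha := hA.isSelfAdjoint)]
  exact fun x hx => le_csSup (finite_spectrum A).bddAbove hx

theorem IsHermitian.lamMin_mem_spectrum [Nonempty ι] (hA : A.IsHermitian) :
    lamMin A ∈ spectrum ℝ A := by
  have hne : (spectrum ℝ A).Nonempty := by
    rw [hA.spectrum_real_eq_range_eigenvalues]
    exact Set.range_nonempty _
  exact hne.csInf_mem (finite_spectrum A)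

theorem PosDef.lamMin_pos [Nonempty ι] (hA : A.PosDef) : 0 < lamMin A := by
  obtain ⟨i, hi⟩ := hA.1.spectrum_real_eq_range_eigenvalues ▸ hA.1.lamMin_mem_spectrum
  exact hi ▸ hA.eigenvalues_pos i

theorem PosDef.exists_isUnit_isHermitian_mul_self_eq (hP : P.PosDef) :
    ∃ T : Matrix ι ι ℝ, IsUnit T ∧ T.IsHermitian ∧ T * T = P :=
  ⟨CFC.sqrt P, (CFC.isUnit_sqrt_iff P hP.posSemidef.nonneg).mpr hP.isUnit,
    (CFC.sqrt_nonneg P).posSemidef.1, CFC.sqrt_mul_sqrt_self P hP.posSemidef.nonneg⟩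

theorem spectrum_inv_mul_eq_of_mul_self_eq (hT : IsUnit T) (hTT : T * T = P)
    (Q : Matrix ι ι ℝ) : spectrum ℝ (P⁻¹ * Q) = spectrum ℝ (T⁻¹ * Q * T⁻¹) := by
  rw [← spectrum.units_conjugate (u := hT.unit), coe_units_inv, IsUnit.unit_spec, ← hTT,
    Matrix.mul_inv_rev, ← Matrix.mul_assoc, ← Matrix.mul_assoc,
    mul_nonsing_inv _ ((isUnit_iff_isUnit_det T).mp hT), Matrix.one_mul]

theorem PosDef.lamMin_inv_mul_smul_le (hP : P.PosDef) (hQ : Q.IsHermitian) :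
    lamMin (P⁻¹ * Q) • P ≤ Q := by
  obtain ⟨T, hTu, hTh, hTT⟩ := hP.exists_isUnit_isHermitian_mul_self_eq
  have hdet := (isUnit_iff_isUnit_det T).mp hTu
  have hW : (T⁻¹ * Q * T⁻¹).IsHermitian := by
    simpa only [hTh.inv.eq] using isHermitian_conjTranspose_mul_mul T⁻¹ hQ
  have hc : lamMin (P⁻¹ * Q) = lamMin (T⁻¹ * Q * T⁻¹) := by
    simp only [lamMin, spectrum_inv_mul_eq_of_mul_self_eq hTu hTT]
  calc lamMin (P⁻¹ * Q) • P = T * (lamMin (T⁻¹ * Q * T⁻¹) • 1) * T := by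
        rw [hc, Matrix.mul_smul, Matrix.smul_mul, Matrix.mul_one, hTT]
    _ ≤ T * (T⁻¹ * Q * T⁻¹) * T :=
        hTh.isSelfAdjoint.conjugate_le_conjugate hW.lamMin_smul_one_le_s10
    _ = Q := by
        rw [← Matrix.mul_assoc, ← Matrix.mul_assoc, mul_nonsing_inv _ hdet, Matrix.one_mul,
          Matrix.mul_assoc, nonsing_inv_mul _ hdet, Matrix.mul_one]

theorem PosDef.lamMin_inv_mul_mem_Icc [Nonempty ι] (hP : P.PosDef) (hQ : 0 ≤ Q) (hQP : Q ≤ P) :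
    lamMin (P⁻¹ * Q) ∈ Set.Icc 0 1 := by
  obtain ⟨T, hTu, hTh, hTT⟩ := hP.exists_isUnit_isHermitian_mul_self_eq
  have hdet := (isUnit_iff_isUnit_det T).mp hTu
  have hTi : IsSelfAdjoint T⁻¹ := hTh.inv.isSelfAdjoint
  have hW0 : 0 ≤ T⁻¹ * Q * T⁻¹ := hTi.conjugate_nonneg hQ
  have hW1 : T⁻¹ * Q * T⁻¹ ≤ 1 :=
    calc T⁻¹ * Q * T⁻¹ ≤ T⁻¹ * P * T⁻¹ := hTi.conjugate_le_conjugate hQP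
      _ = 1 := by
        rw [← hTT, ← Matrix.mul_assoc, nonsing_inv_mul _ hdet, Matrix.one_mul,
          mul_nonsing_inv _ hdet]
  have hmem := (IsSelfAdjoint.of_nonneg hW0).isHermitian.lamMin_mem_spectrum
  have hc : lamMin (P⁻¹ * Q) = lamMin (T⁻¹ * Q * T⁻¹) := by
    simp only [lamMin, spectrum_inv_mul_eq_of_mul_self_eq hTu hTT]
  exact hc ▸ ⟨spectrum_nonneg_of_nonneg hW0 hmem, (CFC.le_one_iff _).mp hW1 _ hmem⟩

open scoped Matrix.Norms.L2Operator in
/- `opNorm` is the `ℓ²` operator norm, so the C⋆-identity `‖X‖² = ‖Xᵀ X‖` applies. -/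
theorem opNorm_le_sqrt_of_transpose_mul_self_le {X : Matrix ι ι ℝ} {r : ℝ}
    (h : Xᵀ * X ≤ r • 1) : opNorm X ≤ √r := by
  rcases isEmpty_or_nonempty ι with hι | hι
  · simp [opNorm, Subsingleton.elim X 0]
  have h0 : 0 ≤ Xᵀ * X := by simpa using (posSemidef_conjTranspose_mul_self X).nonneg
  rw [← Algebra.algebraMap_eq_smul_one, le_algebraMap_iff_spectrum_le] at h
  have hmem := (IsSelfAdjoint.of_nonneg h0).isHermitian.lamMin_mem_spectrum
  have hr : 0 ≤ r := (spectrum_nonneg_of_nonneg h0 hmem).trans (h _ hmem)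
  have hXX : ‖Xᵀ * X‖ ≤ r := by
    have := norm_cfc_le (𝕜 := ℝ) (f := id) (a := Xᵀ * X) hr fun x hx => by
      simpa [abs_of_nonneg (spectrum_nonneg_of_nonneg h0 hx)] using h x hx
    rwa [cfc_id ℝ (Xᵀ * X)] at this
  have hX : ‖X‖ * ‖X‖ = ‖Xᵀ * X‖ := by
    simpa using (l2_opNorm_conjTranspose_mul_self X).symm
  exact (Real.le_sqrt (norm_nonneg X) hr).2 (by rw [sq, hX]; exact hXX)

end Spectrum

end Matrix

theorem ordered_stability_general {n d : ℕ}
    (A : Matrix (Fin n) (Fin n) ℝ) (B : Matrix (Fin n) (Fin d) ℝ)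
    (K : Matrix (Fin d) (Fin n) ℝ)
    (S : Matrix (Fin n) (Fin n) ℝ) (R : Matrix (Fin d) (Fin d) ℝ)
    (hS : S.PosDef) (hR : R.PosSemidef)
    (hK : Stabilizes A B K)
    (V V₀ : Matrix (Fin n) (Fin n) ℝ)
    (hV : V = dlyap (A + B * K) (S + Kᵀ * R * K))
    (hord : (V₀ - V).PosSemidef) :
    ∀ k : ℕ, opNorm ((A + B * K) ^ k) ≤
      Real.sqrt (lamMax V₀ / lamMin S) * Real.sqrt (1 - lamMin (V₀⁻¹ * S)) ^ k := by
  intro k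
  rcases isEmpty_or_nonempty (Fin n) with hn | hn
  · simp only [opNorm, Subsingleton.elim ((A + B * K) ^ k) 0, map_zero, norm_zero]
    positivity
  set L := A + B * K
  set c := lamMin (V₀⁻¹ * S)
  have hVV₀ : V ≤ V₀ := hord
  have hRK : (Kᵀ * R * K).PosSemidef := by simpa using hR.conjTranspose_mul_mul_same K
  have hVeq : V = Lᵀ * V * L + (S + Kᵀ * R * K) := hV ▸ hK.schurStable.dlyap_eq _
  have hSV : S ≤ V := (le_add_of_nonneg_right hRK.nonneg).trans <| le_of_lyapunov_eq hVeq
    (hV ▸ (hK.schurStable.posSemidef_dlyap (hS.posSemidef.add hRK)).nonneg)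
  have hV₀ : V₀.PosDef := hS.of_le (hSV.trans hVV₀)
  obtain ⟨hc0, hc1⟩ := hV₀.lamMin_inv_mul_mem_Icc hS.posSemidef.nonneg (hSV.trans hVV₀)
  have hρ : 0 ≤ 1 - c := sub_nonneg.2 hc1
  have hcontr : Lᵀ * V * L ≤ (1 - c) • V := transpose_mul_mul_le_of_lyapunov_eq hVeq
    ((hV₀.lamMin_inv_mul_smul_le hS.1).trans (le_add_of_nonneg_right hRK.nonneg)) hVV₀ hc0
  have hbound := transpose_mul_self_le_of_transpose_mul_mul_le hS.lamMin_pos (pow_nonneg hρ k)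
    (hS.1.lamMin_smul_one_le_s10.trans hSV) (hVV₀.trans hV₀.1.le_lamMax_smul_one_s10)
    (transpose_pow_mul_mul_pow_le hρ hcontr k)
  calc opNorm (L ^ k) ≤ √(lamMax V₀ / lamMin S * (1 - c) ^ k) :=
        opNorm_le_sqrt_of_transpose_mul_self_le hbound
    _ = √(lamMax V₀ / lamMin S) * √(1 - c) ^ k := by
        rw [Real.sqrt_mul' _ (pow_nonneg hρ k), Real.sqrt_pow_of_nonneg hρ]

/-- Ordered value functions give a uniform exponential stability bound. -/
theorem ordered_stability {n d : ℕ}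
    (A : Matrix (Fin n) (Fin n) ℝ) (B : Matrix (Fin n) (Fin d) ℝ)
    (K K₀ : Matrix (Fin d) (Fin n) ℝ)
    (S : Matrix (Fin n) (Fin n) ℝ) (R : Matrix (Fin d) (Fin d) ℝ)
    (hS : S.PosDef) (hR : R.PosSemidef)
    (hK : Stabilizes A B K) (hK₀ : Stabilizes A B K₀)
    (V V₀ : Matrix (Fin n) (Fin n) ℝ)
    (hV : V = dlyap (A + B * K) (S + Kᵀ * R * K))
    (hV₀ : V₀ = dlyap (A + B * K₀) (S + K₀ᵀ * R * K₀))
    (hord : (V₀ - V).PosSemidef) :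
    ∀ k : ℕ, opNorm ((A + B * K) ^ k) ≤
      Real.sqrt (lamMax V₀ / lamMin S) * Real.sqrt (1 - lamMin (V₀⁻¹ * S)) ^ k :=
  ordered_stability_general A B K S R hS hR hK V V₀ hV hord
end
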